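/- There is a ring isomorphism ℤ[x, y, z₁, z₂]/I ≅ ℤ[x, y]/((x+y)(x²+y²), x⁴, y⁴), where I is the ideal generated by the homogeneous components of positive degree of (1+x)(1+y)(1+z₁+z₂) − 1, namely I = (x + y + z₁, z₂ + xy + x z₁ + y z₁, y z₂ + x z₂ + x y z₁, x y z₂), and the isomorphism sends x ↦ x and y ↦ y. -/

import Mathlib

/-!
In `ℤ[x, y, z₁, z₂]/I` the first two relations solve for the extra generators:
`z₁ = -(x + y)` and `z₂ = (x + y)² - xy = x² + xy + y²`. Substituting, the third relation becomes
`(x + y)(x² + y²)` and the fourth becomes `xy(x² + xy + y²) = x(x + y)(x² + y²) - x⁴`, which is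
also `y(x + y)(x² + y²) - y⁴`. Hence the substitutions
`(x, y, z₁, z₂) ↦ (x, y, -(x + y), x² + xy + y²)` and `(x, y) ↦ (x, y)` respect the relations
and are mutually inverse on generators modulo them.
-/

open MvPolynomial

theorem Ideal.map_eq_zero_of_mem_span {R S F : Type*} [Semiring R] [Semiring S] [FunLike F R S]
    [RingHomClass F R S] (f : F) {s : Set R} (hs : ∀ a ∈ s, f a = 0) :
    ∀ a ∈ Ideal.span s, f a = 0 :=
  fun _ ha => Ideal.span_le (I := RingHom.ker f).mpr hs ha

namespace MvPolynomial

variable {R σ τ : Type*} [CommRing R] {I : Ideal (MvPolynomial σ R)}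
  {J : Ideal (MvPolynomial τ R)}

theorem quotient_algHom_ext {A : Type*} [Semiring A] [Algebra R A]
    {f g : MvPolynomial σ R ⧸ I →ₐ[R] A}
    (h : ∀ i, f (Ideal.Quotient.mk I (X i)) = g (Ideal.Quotient.mk I (X i))) : f = g :=
  Ideal.Quotient.algHom_ext R (algHom_ext h)

theorem liftₐ_aeval_mk_X {A : Type*} [CommRing A] [Algebra R A] (a : σ → A)
    (ha : ∀ p ∈ I, aeval a p = 0) (i : σ) :
    Ideal.Quotient.liftₐ I (aeval a) ha (Ideal.Quotient.mk I (X i)) = a i :=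
  (Ideal.Quotient.lift_mk I _ ha).trans (aeval_X a i)

noncomputable def quotientAlgEquivOfGenerators (f : σ → MvPolynomial τ R ⧸ J)
    (g : τ → MvPolynomial σ R ⧸ I) (hf : ∀ p ∈ I, aeval f p = 0) (hg : ∀ q ∈ J, aeval g q = 0)
    (hgf : ∀ i, Ideal.Quotient.liftₐ J (aeval g) hg (f i) = Ideal.Quotient.mk I (X i))
    (hfg : ∀ j, Ideal.Quotient.liftₐ I (aeval f) hf (g j) = Ideal.Quotient.mk J (X j)) :
    (MvPolynomial σ R ⧸ I) ≃ₐ[R] (MvPolynomial τ R ⧸ J) :=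
  AlgEquiv.ofAlgHom (Ideal.Quotient.liftₐ I (aeval f) hf) (Ideal.Quotient.liftₐ J (aeval g) hg)
    (quotient_algHom_ext fun j => by rw [AlgHom.comp_apply, liftₐ_aeval_mk_X, hfg, AlgHom.id_apply])
    (quotient_algHom_ext fun i => by rw [AlgHom.comp_apply, liftₐ_aeval_mk_X, hgf, AlgHom.id_apply])

theorem quotientAlgEquivOfGenerators_mk_X (f : σ → MvPolynomial τ R ⧸ J)
    (g : τ → MvPolynomial σ R ⧸ I) (hf : ∀ p ∈ I, aeval f p = 0) (hg : ∀ q ∈ J, aeval g q = 0)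
    (hgf : ∀ i, Ideal.Quotient.liftₐ J (aeval g) hg (f i) = Ideal.Quotient.mk I (X i))
    (hfg : ∀ j, Ideal.Quotient.liftₐ I (aeval f) hf (g j) = Ideal.Quotient.mk J (X j)) (i : σ) :
    quotientAlgEquivOfGenerators f g hf hg hgf hfg (Ideal.Quotient.mk I (X i)) = f i :=
  liftₐ_aeval_mk_X f hf i

end MvPolynomial

namespace FlagManifold

noncomputable abbrev baumIdeal : Ideal (MvPolynomial (Fin 4) ℤ) :=
  Ideal.span {X 0 + X 1 + X 2, X 3 + X 0 * X 1 + X 0 * X 2 + X 1 * X 2,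
    X 1 * X 3 + X 0 * X 3 + X 0 * X 1 * X 2, X 0 * X 1 * X 3}

noncomputable abbrev truncatedIdeal : Ideal (MvPolynomial (Fin 2) ℤ) :=
  Ideal.span {(X 0 + X 1) * (X 0 ^ 2 + X 1 ^ 2), X 0 ^ 4, X 1 ^ 4}

local notation "x̄" => Ideal.Quotient.mk baumIdeal (X 0)
local notation "ȳ" => Ideal.Quotient.mk baumIdeal (X 1)
local notation "z̄₁" => Ideal.Quotient.mk baumIdeal (X 2)
local notation "z̄₂" => Ideal.Quotient.mk baumIdeal (X 3)
local notation "ū" => Ideal.Quotient.mk truncatedIdeal (X 0)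
local notation "v̄" => Ideal.Quotient.mk truncatedIdeal (X 1)

theorem baumIdeal_relations :
    x̄ + ȳ + z̄₁ = 0 ∧ z̄₂ + x̄ * ȳ + x̄ * z̄₁ + ȳ * z̄₁ = 0 ∧
      ȳ * z̄₂ + x̄ * z̄₂ + x̄ * ȳ * z̄₁ = 0 ∧ x̄ * ȳ * z̄₂ = 0 := by
  simp only [← map_add, ← map_mul, Ideal.Quotient.eq_zero_iff_mem]
  refine ⟨?_, ?_, ?_, ?_⟩ <;> exact Ideal.subset_span (by simp)

theorem truncatedIdeal_relations : (ū + v̄) * (ū ^ 2 + v̄ ^ 2) = 0 ∧ ū ^ 4 = 0 ∧ v̄ ^ 4 = 0 := by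
  simp only [← map_add, ← map_mul, ← map_pow, Ideal.Quotient.eq_zero_iff_mem]
  refine ⟨?_, ?_, ?_⟩ <;> exact Ideal.subset_span (by simp)

noncomputable def baumToTruncated : Fin 4 → MvPolynomial (Fin 2) ℤ ⧸ truncatedIdeal :=
  ![ū, v̄, -(ū + v̄), ū ^ 2 + ū * v̄ + v̄ ^ 2]

noncomputable def truncatedToBaum : Fin 2 → MvPolynomial (Fin 4) ℤ ⧸ baumIdeal := ![x̄, ȳ]

theorem aeval_baumToTruncated_eq_zero : ∀ p ∈ baumIdeal, aeval baumToTruncated p = 0 := by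
  obtain ⟨hcube, hu4, -⟩ := truncatedIdeal_relations
  refine Ideal.map_eq_zero_of_mem_span _ ?_
  simp only [Set.mem_insert_iff, Set.mem_singleton_iff, forall_eq_or_imp, forall_eq, map_add,
    map_mul, aeval_X, baumToTruncated, Matrix.cons_val]
  exact ⟨by ring, by ring, by linear_combination hcube, by linear_combination ū * hcube - hu4⟩

theorem aeval_truncatedToBaum_eq_zero : ∀ q ∈ truncatedIdeal, aeval truncatedToBaum q = 0 := by
  obtain ⟨h₁, h₂, h₃, h₄⟩ := baumIdeal_relations
  refine Ideal.map_eq_zero_of_mem_span _ ?_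
  simp only [Set.mem_insert_iff, Set.mem_singleton_iff, forall_eq_or_imp, forall_eq, map_add,
    map_mul, map_pow, aeval_X, truncatedToBaum, Matrix.cons_val]
  refine ⟨?_, ?_, ?_⟩
  · linear_combination ((x̄ + ȳ) ^ 2 - x̄ * ȳ) * h₁ - (x̄ + ȳ) * h₂ + h₃
  · linear_combination (x̄ * ((x̄ + ȳ) ^ 2 - x̄ * ȳ) - x̄ * ȳ * (x̄ + ȳ)) * h₁ +
      (x̄ * ȳ - x̄ * (x̄ + ȳ)) * h₂ + x̄ * h₃ - h₄
  · linear_combination (ȳ * ((x̄ + ȳ) ^ 2 - x̄ * ȳ) - x̄ * ȳ * (x̄ + ȳ)) * h₁ +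
      (x̄ * ȳ - ȳ * (x̄ + ȳ)) * h₂ + ȳ * h₃ - h₄

theorem lift_truncatedToBaum_baumToTruncated (i : Fin 4) :
    Ideal.Quotient.liftₐ truncatedIdeal (aeval truncatedToBaum) aeval_truncatedToBaum_eq_zero
      (baumToTruncated i) = Ideal.Quotient.mk baumIdeal (X i) := by
  obtain ⟨h₁, h₂, -, -⟩ := baumIdeal_relations
  match i with
  | 0 | 1 => simp only [baumToTruncated, truncatedToBaum, Matrix.cons_val, liftₐ_aeval_mk_X]
  | 2 =>
    simp only [baumToTruncated, truncatedToBaum, Matrix.cons_val, map_add, map_neg, liftₐ_aeval_mk_X]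
    linear_combination -h₁
  | 3 =>
    simp only [baumToTruncated, truncatedToBaum, Matrix.cons_val, map_add, map_mul, map_pow,
      liftₐ_aeval_mk_X]
    linear_combination (x̄ + ȳ) * h₁ - h₂

theorem lift_baumToTruncated_truncatedToBaum (j : Fin 2) :
    Ideal.Quotient.liftₐ baumIdeal (aeval baumToTruncated) aeval_baumToTruncated_eq_zero
      (truncatedToBaum j) = Ideal.Quotient.mk truncatedIdeal (X j) := by
  match j with
  | 0 | 1 => simp only [baumToTruncated, truncatedToBaum, Matrix.cons_val, liftₐ_aeval_mk_X]

end FlagManifold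

open FlagManifold in
/-- The integral cohomology ring of the flag manifold `Fl(1,2,4)`:
`ℤ[x, y, z₁, z₂]/I ≅ ℤ[x, y]/((x+y)(x²+y²), x⁴, y⁴)`, where `I` is generated by the
homogeneous components of positive degree of `(1+x)(1+y)(1+z₁+z₂) − 1`, and the
isomorphism sends `x ↦ x`, `y ↦ y`. -/
theorem flag_cohomology_presentation :
    let x : MvPolynomial (Fin 4) ℤ := X 0
    let y : MvPolynomial (Fin 4) ℤ := X 1
    let z1 : MvPolynomial (Fin 4) ℤ := X 2
    let z2 : MvPolynomial (Fin 4) ℤ := X 3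
    let I : Ideal (MvPolynomial (Fin 4) ℤ) :=
      Ideal.span {x + y + z1, z2 + x * y + x * z1 + y * z1, y * z2 + x * z2 + x * y * z1,
        x * y * z2}
    let J : Ideal (MvPolynomial (Fin 2) ℤ) :=
      Ideal.span {(X 0 + X 1) * ((X 0) ^ 2 + (X 1) ^ 2), (X 0) ^ 4, (X 1) ^ 4}
    ∃ e : (MvPolynomial (Fin 4) ℤ ⧸ I) ≃+* (MvPolynomial (Fin 2) ℤ ⧸ J),
      e (Ideal.Quotient.mk I x) = Ideal.Quotient.mk J (X 0) ∧
      e (Ideal.Quotient.mk I y) = Ideal.Quotient.mk J (X 1) := by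
  intro x y z1 z2 I J
  let e := quotientAlgEquivOfGenerators baumToTruncated truncatedToBaum
    aeval_baumToTruncated_eq_zero aeval_truncatedToBaum_eq_zero
    lift_truncatedToBaum_baumToTruncated lift_baumToTruncated_truncatedToBaum
  have e_mk_X : ∀ i, e (Ideal.Quotient.mk baumIdeal (X i)) = baumToTruncated i :=
    quotientAlgEquivOfGenerators_mk_X _ _ _ _ _ _
  exact ⟨e.toRingEquiv, e_mk_X 0, e_mk_X 1⟩
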